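/- arXiv:1806.05523 — 5 statements merged into one kernel-verified Lean document; each statement's English description precedes it below -/
import Mathlib

section
/- There is no critical k-truss with exactly k+3 vertices. -/
/-!
In a `k`-truss on `k + 3` vertices, an edge `uv` has at least `k` common neighbours among the
other `k + 1` vertices, so at most one vertex besides `u` and `v` misses `u` or `v`. Hence every
vertex has at most one non-neighbour, and any two non-edges share an endpoint `a`. Then `G - a` is
complete on `k + 2` vertices, so its edges, a nonempty proper subset of those of `G` (as `a` is not
isolated), already form a `k`-truss, contradicting criticality.
-/

/-- Every edge of `G` lies in at least `k` triangles. -/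
def SimpleGraph.EveryEdgeInTriangles {V : Type*} (G : SimpleGraph V) (k : ℕ) : Prop :=
  ∀ ⦃u v : V⦄, G.Adj u v → k ≤ {w : V | G.Adj u w ∧ G.Adj v w}.ncard

/-- A graph is a `k`-truss if it has no isolated vertices and every edge is
contained in at least `k` triangles. -/
def SimpleGraph.IsTruss {V : Type*} (G : SimpleGraph V) (k : ℕ) : Prop :=
  (∀ v : V, ∃ u : V, G.Adj v u) ∧ G.EveryEdgeInTriangles k

/-- A critical `k`-truss: a `k`-truss such that the edge-induced subgraph on no
nonempty proper subset of its edges is a `k`-truss. -/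
def SimpleGraph.IsCriticalTruss {V : Type*} (G : SimpleGraph V) (k : ℕ) : Prop :=
  G.IsTruss k ∧ ∀ L : Set (Sym2 V), L ⊆ G.edgeSet → L.Nonempty → L ≠ G.edgeSet →
    ¬ (SimpleGraph.fromEdgeSet L).EveryEdgeInTriangles k

namespace SimpleGraph

variable {V : Type*} {G : SimpleGraph V} {k : ℕ}

section Finite

variable [Finite V]

theorem EveryEdgeInTriangles.ncard_compl_commonNeighbors_add_le (hG : G.EveryEdgeInTriangles k)
    {u v : V} (huv : G.Adj u v) : (G.commonNeighbors u v)ᶜ.ncard + k ≤ Nat.card V := by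
  have hk : k ≤ (G.commonNeighbors u v).ncard := hG huv
  have := Set.ncard_add_ncard_compl (G.commonNeighbors u v)
  omega

theorem EveryEdgeInTriangles.eq_of_notMem_commonNeighbors (hG : G.EveryEdgeInTriangles k)
    (hV : Nat.card V ≤ k + 3) {u v w w' : V} (huv : G.Adj u v)
    (hw : w ∉ G.commonNeighbors u v) (hw' : w' ∉ G.commonNeighbors u v)
    (hwu : w ≠ u) (hwv : w ≠ v) (hw'u : w' ≠ u) (hw'v : w' ≠ v) : w = w' := by
  by_contra hww'
  have hfour : ({u, v, w, w'} : Set V).ncard = 4 :=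
    Set.ncard_eq_four.mpr ⟨u, v, w, w', huv.ne, hwu.symm, hw'u.symm, hwv.symm, hw'v.symm, hww', rfl⟩
  have hsub : ({u, v, w, w'} : Set V) ⊆ (G.commonNeighbors u v)ᶜ := by
    rintro x (rfl | rfl | rfl | rfl)
    · exact fun hx => G.loopless.irrefl x hx.1
    · exact fun hx => G.loopless.irrefl x hx.2
    · exact hw
    · exact hw'
  have := Set.ncard_le_ncard hsub
  have := hG.ncard_compl_commonNeighbors_add_le huv
  omega

theorem IsTruss.eq_of_not_adj_of_not_adj (hG : G.IsTruss k) (hV : Nat.card V ≤ k + 3)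
    {u v w : V} (hvu : v ≠ u) (hwu : w ≠ u) (huv : ¬G.Adj u v) (huw : ¬G.Adj u w) : v = w := by
  obtain ⟨t, hut⟩ := hG.1 u
  have hnot {x : V} (hux : ¬G.Adj u x) : x ∉ G.commonNeighbors u t := fun hx => hux hx.1
  have hne {x : V} (hux : ¬G.Adj u x) : x ≠ t := by
    rintro rfl
    exact hux hut
  exact hG.2.eq_of_notMem_commonNeighbors hV hut (hnot huv) (hnot huw) hvu (hne huv) hwu (hne huw)

theorem IsTruss.adj_of_not_adj (hG : G.IsTruss k) (hV : Nat.card V ≤ k + 3) {a b x y : V}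
    (hba : b ≠ a) (hab : ¬G.Adj a b) (hxa : x ≠ a) (hya : y ≠ a) (hxy : x ≠ y) : G.Adj x y := by
  by_contra hnxy
  have hbx : b ≠ x := by
    rintro rfl
    exact hya (hG.eq_of_not_adj_of_not_adj hV hxa.symm (Ne.symm hxy) (hab ·.symm) hnxy).symm
  have hby : b ≠ y := by
    rintro rfl
    exact hxa (hG.eq_of_not_adj_of_not_adj hV hya.symm hxy (hab ·.symm) (hnxy ·.symm)).symm
  have hax : G.Adj a x := by
    by_contra hnax
    exact hbx (hG.eq_of_not_adj_of_not_adj hV hba hxa hab hnax)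
  exact hby (hG.2.eq_of_notMem_commonNeighbors hV hax (hab ·.1) (hnxy ·.2) hba hbx hya
    (Ne.symm hxy))

theorem everyEdgeInTriangles_deleteIncidenceSet {a : V} (hV : k + 3 ≤ Nat.card V)
    (hG : ∀ x y, x ≠ a → y ≠ a → x ≠ y → G.Adj x y) :
    (G.deleteIncidenceSet a).EveryEdgeInTriangles k := by
  rintro u v huv
  obtain ⟨huv, hua, hva⟩ := deleteIncidenceSet_adj.mp huv
  have hsub : ({u, v, a} : Set V)ᶜ ⊆ (G.deleteIncidenceSet a).commonNeighbors u v := by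
    intro w hw
    simp only [Set.mem_compl_iff, Set.mem_insert_iff, Set.mem_singleton_iff, not_or] at hw
    obtain ⟨hwu, hwv, hwa⟩ := hw
    simp only [mem_commonNeighbors, deleteIncidenceSet_adj]
    exact ⟨⟨hG u w hua hwa (Ne.symm hwu), hua, hwa⟩, ⟨hG v w hva hwa (Ne.symm hwv), hva, hwa⟩⟩
  have := Set.ncard_le_ncard hsub
  have := Set.ncard_add_ncard_compl ({u, v, a} : Set V)
  have := Set.ncard_eq_three.mpr ⟨u, v, a, huv.ne, hua, hva, rfl⟩
  show k ≤ ((G.deleteIncidenceSet a).commonNeighbors u v).ncard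
  omega

theorem IsTruss.exists_forall_adj [Nonempty V] (hG : G.IsTruss k) (hV : Nat.card V ≤ k + 3) :
    ∃ a, ∀ x y, x ≠ a → y ≠ a → x ≠ y → G.Adj x y := by
  by_cases hcomplete : ∃ a b, b ≠ a ∧ ¬G.Adj a b
  · obtain ⟨a, b, hba, hab⟩ := hcomplete
    exact ⟨a, fun x y => hG.adj_of_not_adj hV hba hab⟩
  · push Not at hcomplete
    exact ⟨Classical.arbitrary V, fun x y _ _ hxy => hcomplete x y hxy.symm⟩

end Finite

theorem IsCriticalTruss.not_everyEdgeInTriangles_of_lt (hG : G.IsCriticalTruss k)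
    {H : SimpleGraph V} (hHG : H < G) (hH : H.edgeSet.Nonempty) : ¬H.EveryEdgeInTriangles k := by
  have hssub := edgeSet_ssubset_edgeSet.mpr hHG
  simpa only [fromEdgeSet_edgeSet] using hG.2 H.edgeSet hssub.subset hH hssub.ne

theorem IsTruss.deleteIncidenceSet_lt (hG : G.IsTruss k) (a : V) : G.deleteIncidenceSet a < G := by
  obtain ⟨t, hat⟩ := hG.1 a
  refine lt_of_le_of_ne (G.deleteIncidenceSet_le a) fun h => ?_
  rw [← h, deleteIncidenceSet_adj] at hat
  exact hat.2.1 rfl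

end SimpleGraph

theorem no_critical_truss_k_add_three {V : Type*} [Fintype V]
    (G : SimpleGraph V) (k : ℕ) (h : G.IsCriticalTruss k) :
    Fintype.card V ≠ k + 3 := by
  intro hcard
  have hV : Nat.card V = k + 3 := Nat.card_eq_fintype_card.trans hcard
  have : Nonempty V := Fintype.card_pos_iff.mp (by omega)
  obtain ⟨a, ha⟩ := h.1.exists_forall_adj hV.le
  obtain ⟨x, y, hxa, hya, hxy⟩ := (Set.one_lt_ncard_iff).mp <| show 1 < ({a}ᶜ : Set V).ncard by
    have := Set.ncard_add_ncard_compl {a}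
    rw [Set.ncard_singleton] at this
    omega
  exact h.not_everyEdgeInTriangles_of_lt (h.1.deleteIncidenceSet_lt a)
    ⟨s(x, y), SimpleGraph.deleteIncidenceSet_adj.mpr ⟨ha x y hxa hya hxy, hxa, hya⟩⟩
    (SimpleGraph.everyEdgeInTriangles_deleteIncidenceSet hV.ge ha)
end

section
/- In a critical k-truss with more than k+3 vertices, every vertex has degree at least k+2. -/
/-!
If `deg v ≤ k + 1`, then an edge `vu` has its `≥ k` triangles through the other neighbours
of `v`, so `deg v = k + 1` and every two neighbours of `v` are adjacent: the closed
neighbourhood `S` of `v` is a clique on `k + 2` vertices. The complete graph on `S` is a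
nonempty `k`-truss, and it is a proper subgraph of `G` because `G` has a vertex outside
`S` (there are more than `k + 2` vertices) and that vertex is not isolated. This
contradicts criticality.
-/

namespace SimpleGraph

variable {V : Type*} {G H : SimpleGraph V} {k : ℕ}

theorem everyEdgeInTriangles_iff :
    G.EveryEdgeInTriangles k ↔ ∀ ⦃u v⦄, G.Adj u v → k ≤ (G.commonNeighbors u v).ncard :=
  Iff.rfl

theorem ncard_neighborSet (v : V) [Fintype (G.neighborSet v)] :
    (G.neighborSet v).ncard = G.degree v := by
  rw [Set.ncard_eq_toFinset_card', Set.toFinset_card, card_neighborSet_eq_degree]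

theorem ncard_insert_neighborSet (v : V) [Fintype (G.neighborSet v)] :
    (insert v (G.neighborSet v)).ncard = G.degree v + 1 := by
  rw [Set.ncard_insert_of_notMem G.notMem_neighborSet_self, ncard_neighborSet]

/-! `fromEdgeSet S.sym2` is the complete graph on `S`: `fromEdgeSet` discards the diagonal. -/

theorem commonNeighbors_fromEdgeSet_sym2 {S : Set V} {a b : V} (ha : a ∈ S) (hb : b ∈ S) :
    (fromEdgeSet S.sym2).commonNeighbors a b = S \ {a, b} := by
  ext w
  simp only [mem_commonNeighbors, fromEdgeSet_adj, Set.mk_mem_sym2_iff, Set.mem_sdiff,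
    Set.mem_insert_iff, Set.mem_singleton_iff]
  grind

theorem everyEdgeInTriangles_fromEdgeSet_sym2 {S : Set V} (hS : k + 2 ≤ S.ncard) :
    (fromEdgeSet S.sym2).EveryEdgeInTriangles k := by
  rw [everyEdgeInTriangles_iff]
  intro a b hab
  rw [fromEdgeSet_adj, Set.mk_mem_sym2_iff] at hab
  obtain ⟨⟨ha, hb⟩, hne⟩ := hab
  rw [commonNeighbors_fromEdgeSet_sym2 ha hb, Set.ncard_sdiff (Set.pair_subset ha hb),
    Set.ncard_pair hne]
  omega

theorem IsClique.fromEdgeSet_sym2_le {S : Set V} (hS : G.IsClique S) :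
    fromEdgeSet S.sym2 ≤ G := by
  intro a b hab
  rw [fromEdgeSet_adj, Set.mk_mem_sym2_iff] at hab
  obtain ⟨⟨ha, hb⟩, hne⟩ := hab
  exact hS ha hb hne

theorem commonNeighbors_subset_neighborSet_sdiff (v u : V) :
    G.commonNeighbors v u ⊆ G.neighborSet v \ {u} :=
  Set.subset_sdiff_singleton (G.commonNeighbors_subset_neighborSet_left v u)
    (G.notMem_commonNeighbors_right v u)

section Degree

variable {v u : V} [Fintype (G.neighborSet v)]

theorem Adj.ncard_neighborSet_sdiff_add_one (hu : G.Adj v u) :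
    (G.neighborSet v \ {u}).ncard + 1 = G.degree v := by
  rw [Set.ncard_sdiff_singleton_add_one (show u ∈ G.neighborSet v from hu), ncard_neighborSet]

theorem EveryEdgeInTriangles.succ_le_degree (hG : G.EveryEdgeInTriangles k) (hu : G.Adj v u) :
    k + 1 ≤ G.degree v := by
  have htri : k ≤ (G.commonNeighbors v u).ncard := hG hu
  have hsub := Set.ncard_le_ncard (G.commonNeighbors_subset_neighborSet_sdiff v u)
  have := hu.ncard_neighborSet_sdiff_add_one
  omega

theorem EveryEdgeInTriangles.commonNeighbors_eq (hG : G.EveryEdgeInTriangles k) (hdeg : G.degree v ≤ k + 1)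
    (hu : G.Adj v u) : G.commonNeighbors v u = G.neighborSet v \ {u} := by
  refine Set.eq_of_subset_of_ncard_le (G.commonNeighbors_subset_neighborSet_sdiff v u) ?_
    (Set.toFinite _)
  have htri : k ≤ (G.commonNeighbors v u).ncard := hG hu
  have := hu.ncard_neighborSet_sdiff_add_one
  omega

theorem EveryEdgeInTriangles.isClique_insert_neighborSet (hG : G.EveryEdgeInTriangles k)
    (hdeg : G.degree v ≤ k + 1) : G.IsClique (insert v (G.neighborSet v)) := by
  refine isClique_insert.mpr ⟨fun a ha b hb hab => ?_, fun b hb _ => hb⟩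
  have hb' : b ∈ G.commonNeighbors v a := by
    rw [hG.commonNeighbors_eq hdeg ha]
    exact ⟨hb, hab.symm⟩
  exact hb'.2

end Degree

theorem IsCriticalTruss.not_everyEdgeInTriangles (hG : G.IsCriticalTruss k) (hHG : H < G)
    (hH : H ≠ ⊥) : ¬ H.EveryEdgeInTriangles k := by
  rw [← fromEdgeSet_edgeSet (G := H)]
  exact hG.2 H.edgeSet (edgeSet_mono hHG.le) (edgeSet_nonempty.mpr hH)
    (fun h => hHG.ne (edgeSet_inj.mp h))

end SimpleGraph

open SimpleGraph in
theorem critical_truss_min_degree {V : Type*} [Fintype V]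
    (G : SimpleGraph V) [DecidableRel G.Adj] (k : ℕ)
    (h : G.IsCriticalTruss k) (hcard : k + 3 < Fintype.card V) (v : V) :
    k + 2 ≤ G.degree v := by
  obtain ⟨hiso, htri⟩ := h.1
  by_contra! hlt
  obtain ⟨u, hu⟩ := hiso v
  have hdeg : G.degree v = k + 1 := le_antisymm (by omega) (htri.succ_le_degree hu)
  set S := insert v (G.neighborSet v)
  have hclique : G.IsClique S := htri.isClique_insert_neighborSet hdeg.le
  have hS : S.ncard = k + 2 := by rw [ncard_insert_neighborSet, hdeg]
  obtain ⟨x, hx⟩ := (Set.ne_univ_iff_exists_notMem S).mp fun hSuniv => by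
    rw [hSuniv, Set.ncard_univ, Nat.card_eq_fintype_card] at hS
    omega
  obtain ⟨y, hxy⟩ := hiso x
  refine h.not_everyEdgeInTriangles (H := fromEdgeSet S.sym2) ?_ ?_
    (everyEdgeInTriangles_fromEdgeSet_sym2 hS.ge)
  · refine hclique.fromEdgeSet_sym2_le.lt_of_ne fun hSG => hx ?_
    rw [← hSG, fromEdgeSet_adj, Set.mk_mem_sym2_iff] at hxy
    exact hxy.1.1
  · exact ne_bot_iff_exists_adj.mpr
      ⟨v, u, (fromEdgeSet_adj _).mpr ⟨⟨Set.mem_insert v _, Set.mem_insert_of_mem v hu⟩, hu.ne⟩⟩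
end

section
/- Every critical 2-truss on n vertices has at least 3n − 6 edges. -/
/-!
Work over `ZMod 2`. A critical truss is connected, so the kernel of its vertex–edge incidence
matrix (the cycle space) has dimension at most `m - n + 1`; the triangles lie in it, hence the
edge–triangle incidence matrix has rank `r ≤ m - n + 1`. If the `N` triangle vectors are
independent, then `N = r` and every edge lies in at least two triangles. Otherwise some nonzero
dependency is supported on at most `r + 1` triangles; each edge lies in an even number of these,
and by criticality the edges they cover are all edges of `G`, so again every edge lies in at least
two of them. Double counting edge–triangle incidences gives `2m ≤ 3(r + 1) ≤ 3(m - n + 2)`.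
-/

open Finset Matrix Module

namespace Finset

variable {α : Type*} [DecidableEq α]

theorem exists_eq_insert_insert_singleton_of_card_eq_three {t : Finset α} (ht : #t = 3)
    {a b : α} (ha : a ∈ t) (hb : b ∈ t) (hab : a ≠ b) : ∃ w, t = {a, b, w} := by
  have hsub : {a, b} ⊆ t := by simp [insert_subset_iff, ha, hb]
  obtain ⟨w, hw⟩ : ∃ w, t \ {a, b} = {w} :=
    card_eq_one.1 (by rw [card_sdiff_of_subset hsub, ht, card_pair hab])
  refine ⟨w, ?_⟩
  rw [← union_sdiff_of_subset hsub, hw, insert_union, singleton_union]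

theorem card_filter_mk_mem_sym2 [Fintype α] {S : Finset (Finset α)} (hS : ∀ t ∈ S, #t = 3)
    {a b : α} (hab : a ≠ b) : #{t ∈ S | s(a, b) ∈ t.sym2} = #{w | {a, b, w} ∈ S} := by
  have himage :
      {t ∈ S | s(a, b) ∈ t.sym2} = image (fun w => {a, b, w}) {w | {a, b, w} ∈ S} := by
    ext t
    simp only [mem_filter, mem_image, mem_univ, true_and, mk_mem_sym2_iff]
    constructor
    · rintro ⟨htS, ha, hb⟩
      obtain ⟨w, rfl⟩ := exists_eq_insert_insert_singleton_of_card_eq_three (hS t htS) ha hb hab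
      exact ⟨w, htS, rfl⟩
    · rintro ⟨w, hw, rfl⟩
      simp [hw]
  rw [himage, card_image_of_injOn]
  intro w hw w' _ hww'
  have hcard := hS _ (mem_filter.1 hw).2
  have hmem : w ∈ ({a, b, w'} : Finset α) := by
    rw [← show ({a, b, w} : Finset α) = {a, b, w'} from hww']
    simp
  simp only [mem_insert, mem_singleton] at hmem
  rcases hmem with rfl | rfl | rfl
  · have := card_le_two (a := b) (b := w)
    simp_all
  · have := card_le_two (a := a) (b := w)
    simp_all
  · rfl

end Finset

theorem Matrix.rank_add_finrank_ker_mulVecLin {K m n : Type*} [Field K] [Fintype n]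
    (A : Matrix m n K) : A.rank + finrank K (LinearMap.ker A.mulVecLin) = Fintype.card n := by
  rw [Matrix.rank, LinearMap.finrank_range_add_finrank_ker, finrank_fintype_fun_eq_card]

/-- A Singleton-type bound: a nonzero vector can be forced to vanish on any `finrank W - 1`
coordinates. -/
theorem Submodule.exists_ne_zero_card_support_le {K ι : Type*} [Field K] [DecidableEq K]
    [Fintype ι] (W : Submodule K (ι → K)) (hW : 0 < finrank K W) :
    ∃ x ∈ W, x ≠ 0 ∧ #{i | x i ≠ 0} + finrank K W ≤ Fintype.card ι + 1 := by
  classical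
  have hle : finrank K W ≤ Fintype.card ι :=
    (Submodule.finrank_le W).trans (finrank_fintype_fun_eq_card K).le
  obtain ⟨T, -, hT⟩ := exists_subset_card_eq (s := (univ : Finset ι)) (n := finrank K W - 1)
    (by rw [card_univ]; omega)
  let restrict : W →ₗ[K] (T → K) := (LinearMap.funLeft K K ((↑) : T → ι)).comp W.subtype
  have hker : LinearMap.ker restrict ≠ ⊥ := LinearMap.ker_ne_bot_of_finrank_lt (by
    rw [finrank_fintype_fun_eq_card, Fintype.card_coe, hT]; omega)
  obtain ⟨⟨x, hxW⟩, hx, hx0⟩ := (Submodule.ne_bot_iff _).1 hker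
  refine ⟨x, hxW, fun h => hx0 (by simp [h]), ?_⟩
  have hsupp : ({i | x i ≠ 0} : Finset ι) ⊆ Tᶜ := fun i hi => by
    rw [mem_compl]
    intro hiT
    exact (mem_filter.1 hi).2 (congrFun hx ⟨i, hiT⟩)
  have := card_le_card hsupp
  rw [card_compl, hT] at this
  omega

namespace SimpleGraph

variable {V : Type*} {G : SimpleGraph V}

theorem IsCriticalTruss.preconnected {k : ℕ} (h : G.IsCriticalTruss k) : G.Preconnected := by
  intro u w
  set L : Set (Sym2 V) := {e | e ∈ G.edgeSet ∧ ∀ z ∈ e, G.Reachable u z}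
  have hL : L = G.edgeSet := by
    by_contra hne
    refine h.2 L (fun e he => he.1) ?_ hne ?_
    · obtain ⟨u', hu'⟩ := h.1.1 u
      exact ⟨s(u, u'), hu', Sym2.forall_mem_pair.2 ⟨.rfl, hu'.reachable⟩⟩
    · intro a b hab
      obtain ⟨⟨habE, hreach⟩, -⟩ := (fromEdgeSet_adj _).1 hab
      obtain ⟨hua, hub⟩ := Sym2.forall_mem_pair.1 hreach
      refine (h.1.2 habE).trans_eq (congrArg Set.ncard (Set.ext fun x => ⟨?_, ?_⟩))
      · rintro ⟨hax, hbx⟩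
        have hux := hua.trans hax.reachable
        exact ⟨(fromEdgeSet_adj _).2 ⟨⟨hax, Sym2.forall_mem_pair.2 ⟨hua, hux⟩⟩, hax.ne⟩,
          (fromEdgeSet_adj _).2 ⟨⟨hbx, Sym2.forall_mem_pair.2 ⟨hub, hux⟩⟩, hbx.ne⟩⟩
      · rintro ⟨hax, hbx⟩
        exact ⟨((fromEdgeSet_adj _).1 hax).1.1, ((fromEdgeSet_adj _).1 hbx).1.1⟩
  obtain ⟨w', hw'⟩ := h.1.1 w
  have hmem : s(w, w') ∈ L := hL ▸ hw'
  exact (Sym2.forall_mem_pair.1 hmem.2).1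

variable [Fintype V] [DecidableEq V] [DecidableRel G.Adj]

theorem card_filter_mem_sym2_le_choose_two (t : Finset V) :
    #{e ∈ G.edgeFinset | e ∈ t.sym2} ≤ (#t).choose 2 := by
  rw [← Sym2.card_image_offDiag]
  refine card_le_card fun e he => ?_
  induction e using Sym2.ind with
  | _ a b =>
    rw [mem_filter, mem_edgeFinset, mem_edgeSet, mk_mem_sym2_iff] at he
    exact mem_image.2 ⟨(a, b), mem_offDiag.2 ⟨he.2.1, he.2.2, he.1.ne⟩, rfl⟩

theorem mul_card_edgeFinset_le {S : Finset (Finset V)} (hS : ∀ t ∈ S, #t = 3) {k : ℕ}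
    (h : ∀ e ∈ G.edgeFinset, k ≤ #{t ∈ S | e ∈ t.sym2}) : k * #G.edgeFinset ≤ 3 * #S := by
  rw [mul_comm, mul_comm 3]
  exact card_mul_le_card_mul (fun e t => e ∈ t.sym2) (by simpa [bipartiteAbove] using h)
    fun t ht => (card_filter_mem_sym2_le_choose_two t).trans (by rw [hS t ht]; rfl)

theorem EveryEdgeInTriangles.le_card_filter_mem_sym2 {k : ℕ}
    (h : G.EveryEdgeInTriangles k) :
    ∀ e ∈ G.edgeFinset, k ≤ #{t ∈ G.cliqueFinset 3 | e ∈ t.sym2} := by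
  intro e he
  induction e using Sym2.ind with
  | _ a b =>
    rw [mem_edgeFinset, mem_edgeSet] at he
    rw [card_filter_mk_mem_sym2 (fun t ht => (mem_cliqueFinset_iff.1 ht).card_eq) he.ne]
    convert h he using 1
    rw [← Set.ncard_coe_finset]
    congr 1
    ext w
    simp [is3Clique_triple_iff, he]

/-- The edges covered by the triangles of `S` span a subgraph in which every edge lies in two
triangles, so by criticality they are all the edges of `G`. -/
theorem IsCriticalTruss.two_le_card_filter_mem_sym2 (h : G.IsCriticalTruss 2)
    {S : Finset (Finset V)} (hS : S ⊆ G.cliqueFinset 3) (hne : S.Nonempty)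
    (hS1 : ∀ e ∈ G.edgeFinset, #{t ∈ S | e ∈ t.sym2} ≠ 1) :
    ∀ e ∈ G.edgeFinset, 2 ≤ #{t ∈ S | e ∈ t.sym2} := by
  have hS3 : ∀ t ∈ S, #t = 3 := fun t ht => (mem_cliqueFinset_iff.1 (hS ht)).card_eq
  set L : Set (Sym2 V) := {e | e ∈ G.edgeSet ∧ ∃ t ∈ S, e ∈ t.sym2}
  have hL2 : ∀ e ∈ L, 2 ≤ #{t ∈ S | e ∈ t.sym2} := by
    rintro e ⟨he, t, htS, het⟩
    have : 0 < #{t ∈ S | e ∈ t.sym2} := card_pos.2 ⟨t, mem_filter.2 ⟨htS, het⟩⟩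
    have := hS1 e (mem_edgeFinset.2 he)
    omega
  have hL : L = G.edgeSet := by
    by_contra hLne
    refine h.2 L (fun e he => he.1) ?_ hLne ?_
    · obtain ⟨t, htS⟩ := hne
      obtain ⟨a, b, c, hab, -, -, rfl⟩ := is3Clique_iff.1 (mem_cliqueFinset_iff.1 (hS htS))
      exact ⟨s(a, b), hab, _, htS, by simp⟩
    · intro a b hab
      obtain ⟨habL, hab⟩ := (fromEdgeSet_adj _).1 hab
      refine (card_filter_mk_mem_sym2 hS3 hab ▸ hL2 _ habL).trans ?_
      rw [← Set.ncard_coe_finset]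
      refine Set.ncard_le_ncard (fun w hw => ?_) (Set.toFinite _)
      have hwS : {a, b, w} ∈ S := by simpa using hw
      obtain ⟨-, haw, hbw⟩ := is3Clique_triple_iff.1 (mem_cliqueFinset_iff.1 (hS hwS))
      exact ⟨(fromEdgeSet_adj _).2 ⟨⟨haw, _, hwS, by simp⟩, haw.ne⟩,
        (fromEdgeSet_adj _).2 ⟨⟨hbw, _, hwS, by simp⟩, hbw.ne⟩⟩
  intro e he
  exact hL2 e (hL ▸ mem_edgeFinset.1 he)

theorem IsClique.card_filter_mem_and_mem_sym2 {t : Finset V} (ht : G.IsClique t) {v : V}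
    (hv : v ∈ t) : #{e ∈ G.edgeFinset | v ∈ e ∧ e ∈ t.sym2} = #t - 1 := by
  suffices {e ∈ G.edgeFinset | v ∈ e ∧ e ∈ t.sym2} = (t.erase v).image (s(v, ·)) by
    rw [this, card_image_of_injective _ fun _ _ => Sym2.congr_right.1, card_erase_of_mem hv]
  ext e
  simp only [mem_filter, mem_edgeFinset, mem_image, mem_erase]
  constructor
  · rintro ⟨he, hve, het⟩
    obtain ⟨u, rfl⟩ := Sym2.mem_iff_exists.1 hve
    exact ⟨u, ⟨(G.ne_of_adj he).symm, (mk_mem_sym2_iff.1 het).2⟩, rfl⟩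
  · rintro ⟨u, ⟨huv, hu⟩, rfl⟩
    exact ⟨ht hv hu huv.symm, Sym2.mem_mk_left v u, mk_mem_sym2_iff.2 ⟨hv, hu⟩⟩

variable (G) in
def edgeIncMatrix : Matrix V G.edgeFinset (ZMod 2) :=
  .of fun v e => if v ∈ (e : Sym2 V) then 1 else 0

variable (G) in
def triangleIncMatrix : Matrix G.edgeFinset (G.cliqueFinset 3) (ZMod 2) :=
  .of fun e t => if (e : Sym2 V) ∈ (t : Finset V).sym2 then 1 else 0

/-- Each vertex of a triangle lies on exactly two of its edges. -/
theorem edgeIncMatrix_mul_triangleIncMatrix :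
    G.edgeIncMatrix * G.triangleIncMatrix = 0 := by
  ext v ⟨t, ht⟩
  have ht3 := mem_cliqueFinset_iff.1 ht
  simp only [mul_apply, edgeIncMatrix, triangleIncMatrix, of_apply, ite_mul, one_mul, zero_mul,
    ← ite_and, Matrix.zero_apply]
  rw [sum_coe_sort _ fun e => if v ∈ e ∧ e ∈ t.sym2 then (1 : ZMod 2) else 0, sum_boole]
  by_cases hv : v ∈ t
  · rw [ht3.isClique.card_filter_mem_and_mem_sym2 hv, ht3.card_eq]
    rfl
  · rw [filter_false_of_mem fun e _ ⟨hve, het⟩ => hv (mem_sym2_iff.1 het v hve), card_empty,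
      Nat.cast_zero]

theorem edgeIncMatrix_transpose_mulVec_mk {a b : V} (hab : G.Adj a b) (y : V → ZMod 2) :
    (G.edgeIncMatrixᵀ *ᵥ y) ⟨s(a, b), mem_edgeFinset.2 hab⟩ = y a + y b := by
  have hfilter : ({v | v ∈ s(a, b)} : Finset V) = {a, b} := by
    ext v
    simp [Sym2.mem_iff]
  simp only [mulVec, dotProduct, transpose_apply, edgeIncMatrix, of_apply, ite_mul, one_mul,
    zero_mul]
  rw [← sum_filter, hfilter, sum_pair hab.ne]

/-- The kernel of the transpose consists of the functions constant along edges, hence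
is spanned by the constant function `1` when `G` is connected. -/
theorem card_le_rank_edgeIncMatrix_add_one (hG : G.Preconnected) :
    Fintype.card V ≤ G.edgeIncMatrix.rank + 1 := by
  rcases isEmpty_or_nonempty V with hV | ⟨⟨v₀⟩⟩
  · simp
  have hker : LinearMap.ker G.edgeIncMatrixᵀ.mulVecLin ≤ ZMod 2 ∙ fun _ => 1 := by
    intro y hy
    have hadj : ∀ a b, G.Adj a b → y a = y b := fun a b hab => by
      have := congrFun (LinearMap.mem_ker.1 hy) ⟨s(a, b), mem_edgeFinset.2 hab⟩
      rw [mulVecLin_apply, edgeIncMatrix_transpose_mulVec_mk hab] at this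
      exact CharTwo.add_eq_zero.1 this
    have hconst : ∀ u, y u = y v₀ := fun u => by
      obtain ⟨p⟩ := hG u v₀
      induction p with
      | nil => rfl
      | cons hadj' _ ih => exact (hadj _ _ hadj').trans ih
    exact Submodule.mem_span_singleton.2 ⟨y v₀, funext fun u => by simp [hconst u]⟩
  have hone : finrank (ZMod 2) (ZMod 2 ∙ fun _ : V => (1 : ZMod 2)) = 1 :=
    finrank_span_singleton fun h => one_ne_zero (congrFun h v₀)
  have := Submodule.finrank_mono hker
  have := G.edgeIncMatrixᵀ.rank_add_finrank_ker_mulVecLin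
  rw [rank_transpose] at this
  omega

theorem even_card_filter_mem_sym2_of_mulVec_eq_zero {x : G.cliqueFinset 3 → ZMod 2}
    (hx : G.triangleIncMatrix *ᵥ x = 0) (e : G.edgeFinset) :
    Even #{t | x t ≠ 0 ∧ (e : Sym2 V) ∈ (t : Finset V).sym2} := by
  have hzero := congrFun hx e
  simp only [mulVec, dotProduct, triangleIncMatrix, of_apply, ite_mul, one_mul, zero_mul,
    Pi.zero_apply] at hzero
  rw [← ZMod.natCast_eq_zero_iff_even, ← sum_boole]
  refine (sum_congr rfl fun t _ => ?_).trans hzero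
  generalize x t = a
  by_cases het : (e : Sym2 V) ∈ (t : Finset V).sym2
  · simp only [het, and_true, if_true]
    revert a
    decide
  · simp only [het, and_false, if_false]

theorem IsCriticalTruss.exists_triangle_cover (h : G.IsCriticalTruss 2) :
    ∃ S ⊆ G.cliqueFinset 3, (∀ e ∈ G.edgeFinset, 2 ≤ #{t ∈ S | e ∈ t.sym2}) ∧
      #S ≤ G.triangleIncMatrix.rank + 1 := by
  have hrank := G.triangleIncMatrix.rank_add_finrank_ker_mulVecLin
  rw [Fintype.card_coe] at hrank
  rcases Nat.eq_zero_or_pos (finrank (ZMod 2) (LinearMap.ker G.triangleIncMatrix.mulVecLin))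
    with hd | hd
  · exact ⟨G.cliqueFinset 3, subset_rfl, h.1.2.le_card_filter_mem_sym2, by omega⟩
  obtain ⟨x, hx, hx0, hcard⟩ := Submodule.exists_ne_zero_card_support_le _ hd
  rw [Fintype.card_coe] at hcard
  set S := ({t | x t ≠ 0} : Finset (G.cliqueFinset 3)).map (.subtype _)
  have hS : S ⊆ G.cliqueFinset 3 := fun t ht => by
    obtain ⟨⟨t', ht'⟩, -, rfl⟩ := mem_map.1 ht
    exact ht'
  refine ⟨S, hS, h.two_le_card_filter_mem_sym2 hS ?_ fun e he hone => ?_,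
    by rw [card_map]; omega⟩
  · obtain ⟨t, ht⟩ := Function.ne_iff.1 hx0
    exact ⟨t, mem_map_of_mem _ (mem_filter.2 ⟨mem_univ t, ht⟩)⟩
  · have := even_card_filter_mem_sym2_of_mulVec_eq_zero hx ⟨e, he⟩
    rw [filter_map, card_map, filter_filter] at hone
    exact Nat.not_even_one (hone ▸ this)

end SimpleGraph

theorem critical_two_truss_min_edges {V : Type*} [Fintype V]
    (G : SimpleGraph V) (h : G.IsCriticalTruss 2) :
    (3 : ℤ) * (Fintype.card V : ℤ) - 6 ≤ (G.edgeSet.ncard : ℤ) := by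
  classical
  obtain ⟨S, hS, hcover, hcard⟩ := h.exists_triangle_cover
  have hedges : 2 * #G.edgeFinset ≤ 3 * #S :=
    G.mul_card_edgeFinset_le (fun t ht => (SimpleGraph.mem_cliqueFinset_iff.1 (hS ht)).card_eq)
      hcover
  have hranks := rank_add_rank_le_card_of_mul_eq_zero G.edgeIncMatrix_mul_triangleIncMatrix
  have hvertices := G.card_le_rank_edgeIncMatrix_add_one h.preconnected
  rw [Fintype.card_coe] at hranks
  rw [← SimpleGraph.coe_edgeFinset, Set.ncard_coe_finset]
  omega
end

section
/- For every n ≥ 6, the graph consisting of a cycle C of length n−2 together with two additional vertices x1, x2 each adjacent to all vertices of C is a critical 2-truss with n vertices and 3n − 6 edges. -/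
/-- The graph consisting of a cycle of length `n - 2` together with two extra
vertices each adjacent to every vertex of the cycle. -/
def cycleWithTwoApexes (n : ℕ) : SimpleGraph (Fin (n - 2) ⊕ Fin 2) :=
  SimpleGraph.fromRel (fun a b =>
    match a, b with
    | .inl i, .inl j => ((i : ℕ) + 1) % (n - 2) = (j : ℕ)
    | .inl _, .inr _ => True
    | _, _ => False)

/-!
Write `m = n - 2` for the length of the cycle `c₀ ⋯ c_{m-1}`. For `m ≥ 4` every edge lies in
exactly two triangles: a cycle edge `cᵢcᵢ₊₁` in the two through the apexes, a spoke `cᵢxₐ` in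
`cᵢ₋₁cᵢxₐ` and `cᵢcᵢ₊₁xₐ`. Hence the edge set of a subgraph in which every edge still lies in
two triangles contains, with each of its edges, both triangles of the whole graph through it.
A cycle edge `cᵢcᵢ₊₁` then forces the spoke `cᵢ₊₁x₀`, which forces `cᵢ₊₁cᵢ₊₂`; going around the
cycle all cycle edges, and with them all spokes, are forced. The `m` cycle edges and `2m`
spokes give `3n - 6` edges.
-/

open Fin.NatCast Fin.CommRing

theorem Fin.natCast_ne_zero_of_lt {m k : ℕ} [NeZero m] (hk : 0 < k) (hkm : k < m) :
    (k : Fin m) ≠ 0 := by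
  rw [Ne, Fin.natCast_eq_zero]
  exact Nat.not_dvd_of_pos_of_lt hk hkm

theorem Fin.forall_of_add_one {m : ℕ} [NeZero m] {P : Fin m → Prop} {i₀ : Fin m} (h₀ : P i₀)
    (hstep : ∀ i, P i → P (i + 1)) (j : Fin m) : P j := by
  have hk : ∀ k : ℕ, P (i₀ + k) := by
    intro k
    induction k with
    | zero => simpa using h₀
    | succ k ih => simpa [add_assoc] using hstep _ ih
  simpa using hk (j - i₀ : Fin m)

namespace SimpleGraph

/-- The triangles through an edge of the subgraph are among the at most `k` triangles of `G`
through it, so they are all of them. -/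
theorem EveryEdgeInTriangles.mem_of_commonNeighbors {V : Type*} [Finite V] {G : SimpleGraph V}
    {k : ℕ} {L : Set (Sym2 V)}
    (hG : ∀ ⦃u v⦄, G.Adj u v → (G.commonNeighbors u v).ncard ≤ k) (hLG : L ⊆ G.edgeSet)
    (hL : (fromEdgeSet L).EveryEdgeInTriangles k) {u v w : V} (huv : s(u, v) ∈ L)
    (hw : w ∈ G.commonNeighbors u v) : s(u, w) ∈ L ∧ s(v, w) ∈ L := by
  have hHG : fromEdgeSet L ≤ G := (fromEdgeSet_le G).mpr fun e he => hLG he.1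
  have hHuv : (fromEdgeSet L).Adj u v := (fromEdgeSet_adj L).mpr ⟨huv, (hLG huv).ne⟩
  have hsub : (fromEdgeSet L).commonNeighbors u v ⊆ G.commonNeighbors u v :=
    fun x hx => ⟨hHG hx.1, hHG hx.2⟩
  have hcn : (fromEdgeSet L).commonNeighbors u v = G.commonNeighbors u v :=
    Set.eq_of_subset_of_ncard_le hsub ((hG (hHG hHuv)).trans (hL hHuv))
  rw [← hcn] at hw
  exact ⟨((fromEdgeSet_adj L).mp hw.1).1, ((fromEdgeSet_adj L).mp hw.2).1⟩

open Sum

/-- The skeleton of the `m`-gonal bipyramid. `cycleWithTwoApexes n` is `bipyramid (n - 2)`;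
indexing by the cycle length keeps truncated subtraction out of the development. -/
def bipyramid (m : ℕ) : SimpleGraph (Fin m ⊕ Fin 2) :=
  fromRel (fun a b =>
    match a, b with
    | .inl i, .inl j => ((i : ℕ) + 1) % m = (j : ℕ)
    | .inl _, .inr _ => True
    | _, _ => False)

theorem cycleWithTwoApexes_eq_bipyramid (n : ℕ) : cycleWithTwoApexes n = bipyramid (n - 2) := by
  unfold cycleWithTwoApexes bipyramid
  congr 1
  funext a b
  cases a <;> cases b <;> rfl

variable {m : ℕ}

@[simp]
theorem bipyramid_adj_inl_inr (i : Fin m) (a : Fin 2) : (bipyramid m).Adj (inl i) (inr a) := by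
  simp [bipyramid]

@[simp]
theorem bipyramid_adj_inr_inl (a : Fin 2) (i : Fin m) : (bipyramid m).Adj (inr a) (inl i) :=
  (bipyramid_adj_inl_inr i a).symm

@[simp]
theorem bipyramid_not_adj_inr_inr (a b : Fin 2) : ¬(bipyramid m).Adj (inr a) (inr b) := by
  simp [bipyramid]

variable [NeZero m]

theorem bipyramid_adj_inl_inl (hm : 1 < m) {i j : Fin m} :
    (bipyramid m).Adj (inl i) (inl j) ↔ i + 1 = j ∨ j + 1 = i := by
  have hval : ∀ i j : Fin m, ((i : ℕ) + 1) % m = j ↔ i + 1 = j := fun i j => by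
    rw [Fin.ext_iff, Fin.val_add, Fin.val_one', Nat.add_mod_mod]
  have hne : ∀ i : Fin m, i + 1 ≠ i := fun i h =>
    Fin.natCast_ne_zero_of_lt (k := 1) one_pos hm (by simpa using h)
  simp only [bipyramid, fromRel_adj, ne_eq, inl.injEq, hval]
  constructor
  · exact And.right
  · rintro (h | h)
    · exact ⟨fun hij => hne i (hij ▸ h), Or.inl h⟩
    · exact ⟨fun hij => hne j (hij ▸ h), Or.inr h⟩

theorem bipyramid_commonNeighbors_inl_inl_add_one (hm : 4 ≤ m) (i : Fin m) :
    (bipyramid m).commonNeighbors (inl i) (inl (i + 1)) = {inr 0, inr 1} := by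
  have h1 : (1 : Fin m) ≠ 0 := mod_cast Fin.natCast_ne_zero_of_lt (k := 1) one_pos (by omega)
  have h3 : (3 : Fin m) ≠ 0 := mod_cast Fin.natCast_ne_zero_of_lt (k := 3) three_pos (by omega)
  ext (k | a)
  · simp only [mem_commonNeighbors, bipyramid_adj_inl_inl (by omega : 1 < m),
      Set.mem_insert_iff, Set.mem_singleton_iff, reduceCtorEq, or_false]
    grind
  · fin_cases a <;> simp [mem_commonNeighbors]

theorem bipyramid_commonNeighbors_inl_inr (hm : 1 < m) (i : Fin m) (a : Fin 2) :
    (bipyramid m).commonNeighbors (inl i) (inr a) = {inl (i + 1), inl (i - 1)} := by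
  ext (k | b)
  · simp only [mem_commonNeighbors, bipyramid_adj_inl_inl hm, bipyramid_adj_inr_inl, and_true,
      Set.mem_insert_iff, Set.mem_singleton_iff, inl.injEq]
    grind
  · simp [mem_commonNeighbors]

theorem bipyramid_ncard_commonNeighbors (hm : 4 ≤ m) {u v : Fin m ⊕ Fin 2}
    (huv : (bipyramid m).Adj u v) : ((bipyramid m).commonNeighbors u v).ncard = 2 := by
  have h2 : (2 : Fin m) ≠ 0 := mod_cast Fin.natCast_ne_zero_of_lt (k := 2) two_pos (by omega)
  have hspoke (i : Fin m) (a : Fin 2) :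
      ((bipyramid m).commonNeighbors (inl i) (inr a)).ncard = 2 := by
    rw [bipyramid_commonNeighbors_inl_inr (by omega), Set.ncard_pair]
    simp only [ne_eq, inl.injEq]
    exact fun h => h2 (by linear_combination h)
  rcases u with i | a <;> rcases v with j | b
  · rcases (bipyramid_adj_inl_inl (by omega)).1 huv with rfl | rfl
    · simp [bipyramid_commonNeighbors_inl_inl_add_one hm]
    · simp [commonNeighbors_symm, bipyramid_commonNeighbors_inl_inl_add_one hm]
  · exact hspoke i b
  · rw [commonNeighbors_symm]
    exact hspoke j a
  · exact absurd huv (bipyramid_not_adj_inr_inr a b)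

theorem bipyramid_isTruss (hm : 4 ≤ m) : (bipyramid m).IsTruss 2 := by
  refine ⟨?_, fun _ _ huv => (bipyramid_ncard_commonNeighbors hm huv).ge⟩
  rintro (i | a)
  · exact ⟨inr 0, bipyramid_adj_inl_inr i 0⟩
  · exact ⟨inl 0, bipyramid_adj_inr_inl a 0⟩

theorem bipyramid_edgeSet (hm : 1 < m) :
    (bipyramid m).edgeSet = Set.range (fun i : Fin m => s(inl i, inl (i + 1))) ∪
      Set.range (fun p : Fin m × Fin 2 => s(inl p.1, inr p.2)) := by
  ext e
  induction e using Sym2.ind with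
  | _ u v =>
  rcases u with i | a <;> rcases v with j | b
  · simp only [mem_edgeSet, bipyramid_adj_inl_inl hm, Set.mem_union, Set.mem_range, Sym2.eq,
      Sym2.rel_iff', Prod.mk.injEq, inl.injEq, Prod.swap_prod_mk, reduceCtorEq, and_false, or_self,
      exists_const, or_false]
    grind
  all_goals simp

theorem bipyramid_ncard_edgeSet (hm : 3 ≤ m) : (bipyramid m).edgeSet.ncard = 3 * m := by
  have h2 : (2 : Fin m) ≠ 0 := mod_cast Fin.natCast_ne_zero_of_lt (k := 2) two_pos (by omega)
  have hcycle : Function.Injective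
      fun i : Fin m => (s(inl i, inl (i + 1)) : Sym2 (Fin m ⊕ Fin 2)) := by
    intro i j hij
    simp only [Sym2.eq_iff, inl.injEq] at hij
    rcases hij with ⟨hij, -⟩ | ⟨hij, hji⟩
    · exact hij
    · exact absurd (by linear_combination hji - hij) h2
  have hspoke : Function.Injective
      fun p : Fin m × Fin 2 => (s(inl p.1, inr p.2) : Sym2 (Fin m ⊕ Fin 2)) := by
    rintro ⟨i, a⟩ ⟨j, b⟩ hij
    simpa [Sym2.eq_iff] using hij
  have hdisj : Disjoint
      (Set.range fun i : Fin m => (s(inl i, inl (i + 1)) : Sym2 (Fin m ⊕ Fin 2)))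
      (Set.range fun p : Fin m × Fin 2 => s(inl p.1, inr p.2)) := by
    simp [Set.disjoint_left]
  rw [bipyramid_edgeSet (by omega), Set.ncard_union_eq hdisj, Set.ncard_range_of_injective hcycle,
    Set.ncard_range_of_injective hspoke]
  simp only [Nat.card_eq_fintype_card, Fintype.card_fin, Fintype.card_prod]
  ring

theorem eq_bipyramid_edgeSet_of_everyEdgeInTriangles (hm : 4 ≤ m)
    {L : Set (Sym2 (Fin m ⊕ Fin 2))}
    (hLG : L ⊆ (bipyramid m).edgeSet) (hL : L.Nonempty)
    (htri : (fromEdgeSet L).EveryEdgeInTriangles 2) : L = (bipyramid m).edgeSet := by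
  have hclosed {u v w} (huv : s(u, v) ∈ L) (hw : w ∈ (bipyramid m).commonNeighbors u v) :=
    htri.mem_of_commonNeighbors (fun _ _ h => (bipyramid_ncard_commonNeighbors hm h).le) hLG huv hw
  have spokes_of_cycle (i : Fin m) (a : Fin 2) (h : s(inl i, inl (i + 1)) ∈ L) :
      s(inl i, inr a) ∈ L ∧ s(inl (i + 1), inr a) ∈ L :=
    hclosed h ⟨bipyramid_adj_inl_inr i a, bipyramid_adj_inl_inr (i + 1) a⟩
  have cycle_of_spoke (i : Fin m) (a : Fin 2) (h : s(inl i, inr a) ∈ L) :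
      s(inl i, inl (i + 1)) ∈ L :=
    (hclosed h ⟨(bipyramid_adj_inl_inl (by omega)).2 (Or.inl rfl),
      bipyramid_adj_inr_inl a (i + 1)⟩).1
  have hcycle (i : Fin m) : s(inl i, inl (i + 1)) ∈ L := by
    obtain ⟨i₀, h₀⟩ : ∃ i₀ : Fin m, s(inl i₀, inl (i₀ + 1)) ∈ L := by
      obtain ⟨e, he⟩ := hL
      have heG := hLG he
      rw [bipyramid_edgeSet (by omega)] at heG
      rcases heG with ⟨i, rfl⟩ | ⟨⟨i, a⟩, rfl⟩
      · exact ⟨i, he⟩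
      · exact ⟨i, cycle_of_spoke i a he⟩
    exact Fin.forall_of_add_one h₀ (fun i h => cycle_of_spoke _ 0 (spokes_of_cycle i 0 h).2) i
  refine hLG.antisymm ?_
  rw [bipyramid_edgeSet (by omega)]
  rintro _ (⟨i, rfl⟩ | ⟨⟨i, a⟩, rfl⟩)
  · exact hcycle i
  · exact (spokes_of_cycle i a (hcycle i)).1

end SimpleGraph

theorem cycleWithTwoApexes_critical_two_truss (n : ℕ) (hn : 6 ≤ n) :
    (cycleWithTwoApexes n).IsCriticalTruss 2 ∧
    Fintype.card (Fin (n - 2) ⊕ Fin 2) = n ∧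
    (cycleWithTwoApexes n).edgeSet.ncard = 3 * n - 6 := by
  have hm : 4 ≤ n - 2 := by omega
  rw [SimpleGraph.cycleWithTwoApexes_eq_bipyramid]
  have : NeZero (n - 2) := ⟨by omega⟩
  refine ⟨⟨SimpleGraph.bipyramid_isTruss hm, fun L hLG hL hLne htri => ?_⟩, ?_, ?_⟩
  · exact hLne (SimpleGraph.eq_bipyramid_edgeSet_of_everyEdgeInTriangles hm hLG hL htri)
  · simp only [Fintype.card_sum, Fintype.card_fin]
    omega
  · rw [SimpleGraph.bipyramid_ncard_edgeSet (by omega)]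
    omega
end

section
/- Every critical k-truss on n vertices with n ≥ k+4 has at least n(k+2)/2 edges. -/
/-!
In a critical `k`-truss on at least `k + 3` vertices every vertex has degree at least `k + 2`.
Otherwise some vertex `v` has degree exactly `k + 1`, its closed neighbourhood is a
`(k + 2)`-clique, and the edges of that clique already form a `k`-truss; it is a proper one,
since a vertex outside the clique is not isolated. The handshake lemma then turns the degree
bound into the edge bound.
-/

namespace SimpleGraph

variable {V : Type*} {G : SimpleGraph V} {k : ℕ}

lemma fromEdgeSet_edgeSet_inter_sym2_adj {s : Set V} {a b : V} :
    (fromEdgeSet (G.edgeSet ∩ s.sym2)).Adj a b ↔ G.Adj a b ∧ a ∈ s ∧ b ∈ s := by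
  simp only [fromEdgeSet_adj, Set.mem_inter_iff, mem_edgeSet, Set.mk_mem_sym2_iff]
  exact ⟨fun h ↦ h.1, fun h ↦ ⟨h, h.1.ne⟩⟩

lemma IsClique.everyEdgeInTriangles_fromEdgeSet {s : Set V} (hs : G.IsClique s)
    (hcard : s.ncard = k + 2) :
    (fromEdgeSet (G.edgeSet ∩ s.sym2)).EveryEdgeInTriangles k := by
  intro a b hab
  rw [fromEdgeSet_edgeSet_inter_sym2_adj] at hab
  obtain ⟨hab, ha, hb⟩ := hab
  have hcommon : {w | (fromEdgeSet (G.edgeSet ∩ s.sym2)).Adj a w ∧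
      (fromEdgeSet (G.edgeSet ∩ s.sym2)).Adj b w} = s \ {a, b} := by
    ext w
    simp only [fromEdgeSet_edgeSet_inter_sym2_adj, Set.mem_ofPred_eq, Set.mem_sdiff,
      Set.mem_insert_iff, Set.mem_singleton_iff]
    constructor
    · rintro ⟨⟨haw, -, hw⟩, hbw, -⟩
      exact ⟨hw, by rintro (rfl | rfl) <;> simp_all⟩
    · rintro ⟨hw, hne⟩
      push Not at hne
      exact ⟨⟨hs ha hw hne.1.symm, ha, hw⟩, hs hb hw hne.2.symm, hb, hw⟩
  have hpair : ({a, b} : Set V) ⊆ s := Set.insert_subset ha (Set.singleton_subset_iff.2 hb)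
  rw [hcommon, Set.ncard_sdiff hpair, hcard, Set.ncard_pair hab.ne]
  omega

lemma setOf_adj_and_adj_subset_neighborSet_sdiff (u v : V) :
    {w | G.Adj v w ∧ G.Adj u w} ⊆ G.neighborSet v \ {u} :=
  fun _ ⟨hvw, huw⟩ ↦ ⟨hvw, by rintro rfl; exact G.irrefl huw⟩

namespace EveryEdgeInTriangles

variable {u v : V}

lemma le_ncard_neighborSet_sdiff (hG : G.EveryEdgeInTriangles k)
    (hfin : (G.neighborSet v).Finite) (hvu : G.Adj v u) :
    k ≤ (G.neighborSet v \ {u}).ncard :=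
  (hG hvu).trans (Set.ncard_le_ncard (setOf_adj_and_adj_subset_neighborSet_sdiff u v)
    hfin.sdiff)

lemma add_one_le_ncard_neighborSet (hG : G.EveryEdgeInTriangles k)
    (hfin : (G.neighborSet v).Finite) (hvu : G.Adj v u) :
    k + 1 ≤ (G.neighborSet v).ncard := by
  rw [← Set.ncard_sdiff_singleton_add_one (show u ∈ G.neighborSet v from hvu) hfin]
  exact Nat.add_le_add_right (hG.le_ncard_neighborSet_sdiff hfin hvu) 1

/-- With degree at most `k + 1`, each edge `va` has all of `N(v) \ {a}` as common neighbours. -/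
lemma isClique_insert_neighborSet_s16 (hG : G.EveryEdgeInTriangles k)
    (hfin : (G.neighborSet v).Finite) (hdeg : (G.neighborSet v).ncard ≤ k + 1) :
    G.IsClique (insert v (G.neighborSet v)) := by
  refine isClique_insert.2 ⟨fun a ha b hb hab ↦ ?_, fun b hb _ ↦ hb⟩
  have hcommon : {w | G.Adj v w ∧ G.Adj a w} = G.neighborSet v \ {a} := by
    refine Set.eq_of_subset_of_ncard_le (setOf_adj_and_adj_subset_neighborSet_sdiff a v) ?_
      hfin.sdiff
    rw [Set.ncard_sdiff_singleton_of_mem ha]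
    exact (Nat.sub_le_of_le_add hdeg).trans (hG ha)
  have hb' : b ∈ {w | G.Adj v w ∧ G.Adj a w} := hcommon ▸ ⟨hb, hab.symm⟩
  exact hb'.2

end EveryEdgeInTriangles

lemma IsCriticalTruss.add_two_le_ncard_neighborSet [Finite V] (h : G.IsCriticalTruss k)
    (hn : k + 3 ≤ Nat.card V) (v : V) : k + 2 ≤ (G.neighborSet v).ncard := by
  by_contra! hdeg
  obtain ⟨⟨hnoIsolated, hG⟩, hcritical⟩ := h
  obtain ⟨u, hvu⟩ := hnoIsolated v
  have hfin : (G.neighborSet v).Finite := Set.toFinite _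
  have hdeg' : (G.neighborSet v).ncard = k + 1 :=
    le_antisymm (by omega) (hG.add_one_le_ncard_neighborSet hfin hvu)
  set S := insert v (G.neighborSet v)
  have hS : S.ncard = k + 2 := by
    rw [Set.ncard_insert_of_notMem G.notMem_neighborSet_self hfin, hdeg']
  obtain ⟨w, hw⟩ : ∃ w, w ∉ S := by
    by_contra! hall
    have := Set.ncard_univ V ▸ congrArg Set.ncard (Set.eq_univ_of_forall hall)
    omega
  obtain ⟨x, hwx⟩ := hnoIsolated w
  refine hcritical (G.edgeSet ∩ S.sym2) Set.inter_subset_left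
    ⟨s(v, u), hvu, Set.mem_insert _ _, Set.mem_insert_of_mem _ hvu⟩ (fun heq ↦ ?_)
    ((hG.isClique_insert_neighborSet_s16 hfin hdeg'.le).everyEdgeInTriangles_fromEdgeSet hS)
  have hwx' : s(w, x) ∈ G.edgeSet ∩ S.sym2 := by rw [heq]; exact hwx
  exact hw hwx'.2.1

lemma card_mul_le_two_mul_ncard_edgeSet [Fintype V] {d : ℕ}
    (hd : ∀ v, d ≤ (G.neighborSet v).ncard) : Fintype.card V * d ≤ 2 * G.edgeSet.ncard := by
  classical
  calc Fintype.card V * d = ∑ _v : V, d := by simp [mul_comm]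
    _ ≤ ∑ v, G.degree v := Finset.sum_le_sum fun v _ ↦ by
        simpa [← card_neighborSet_eq_degree, ← Nat.card_coe_set_eq] using hd v
    _ = 2 * G.edgeSet.ncard := by
        rw [sum_degrees_eq_twice_card_edges, ← Set.ncard_coe_finset, coe_edgeFinset]

end SimpleGraph

theorem critical_truss_min_edges_general {V : Type*} [Fintype V]
    (G : SimpleGraph V) (k : ℕ)
    (hn : k + 4 ≤ Fintype.card V) (h : G.IsCriticalTruss k) :
    (Fintype.card V : ℚ) * ((k : ℚ) + 2) / 2 ≤ (G.edgeSet.ncard : ℚ) := by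
  have hmindeg (v : V) : k + 2 ≤ (G.neighborSet v).ncard :=
    h.add_two_le_ncard_neighborSet (by rw [Nat.card_eq_fintype_card]; omega) v
  have hedges : Fintype.card V * (k + 2) ≤ 2 * G.edgeSet.ncard :=
    G.card_mul_le_two_mul_ncard_edgeSet hmindeg
  rw [div_le_iff₀ two_pos, mul_comm _ (2 : ℚ)]
  exact_mod_cast hedges

theorem critical_truss_min_edges {V : Type*} [Fintype V]
    (G : SimpleGraph V) (k : ℕ) (hk : 2 ≤ k)
    (hn : k + 4 ≤ Fintype.card V) (h : G.IsCriticalTruss k) :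
    (Fintype.card V : ℚ) * ((k : ℚ) + 2) / 2 ≤ (G.edgeSet.ncard : ℚ) :=
  critical_truss_min_edges_general G k hn h
end
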